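/- For a finite set S of simplexes, S is a cosimplicial complex if and only if the set cl(S) \ S is a simplicial complex. -/

import Mathlib

open Finset

abbrev Simplex : Type := Finset ℕ
abbrev Cplx : Type := Finset (Finset ℕ)

/-- A simplicial complex: a finite set of nonempty finite sets closed under
taking nonempty subsets. -/
def IsSimpComplex (K : Cplx) : Prop :=
  (∀ τ ∈ K, τ.Nonempty) ∧ ∀ τ ∈ K, ∀ σ : Simplex, σ ⊆ τ → σ.Nonempty → σ ∈ K

/-- A cosimplicial complex: for all σ, τ ∈ S, every ν with σ ⊆ ν ⊆ τ is in S. -/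
def IsCosimplicial (S : Cplx) : Prop :=
  ∀ σ ∈ S, ∀ τ ∈ S, ∀ ν : Simplex, σ ⊆ ν → ν ⊆ τ → ν ∈ S

/-- S is open for K. -/
def IsOpenFor (K S : Cplx) : Prop :=
  S ⊆ K ∧ ∀ σ ∈ S, ∀ τ ∈ K, σ ⊆ τ → τ ∈ S

/-- S is closed for K. -/
def IsClosedFor (K S : Cplx) : Prop :=
  S ⊆ K ∧ IsSimpComplex S

/-- Closure of a finite set of simplexes: all nonempty subsets of members. -/
def cl (S : Cplx) : Cplx :=
  S.biUnion fun τ => τ.powerset.filter fun σ => σ.Nonempty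

/-- (σ, τ) is a free pair for K: τ is the only face of K properly containing σ. -/
def IsFreePair (K : Cplx) (σ τ : Simplex) : Prop :=
  σ ∈ K ∧ τ ∈ K ∧ σ ⊂ τ ∧ ∀ ρ ∈ K, σ ⊂ ρ → ρ = τ

/-- K' is an elementary expansion of K. -/
def ElemExpansion (K' K : Cplx) : Prop :=
  ∃ σ τ : Simplex, σ ∉ K ∧ τ ∉ K ∧ K' = K ∪ {σ, τ} ∧ IsFreePair K' σ τ

/-- K' is an elementary filling of K: K' = K ∪ {ν} with ν a facet of K'. -/
def ElemFilling (K' K : Cplx) : Prop :=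
  ∃ ν : Simplex, ν ∉ K ∧ K' = insert ν K ∧ ∀ ρ ∈ K', ν ⊆ ρ → ρ = ν

/-- A collapses onto B: a sequence of elementary collapses from A to B. -/
def Collapses (A B : Cplx) : Prop :=
  Relation.ReflTransGen (fun X Y : Cplx => ElemExpansion X Y) A B

/-- A Morse sequence from L to K, as W 0, …, W k, consisting of simplicial
complexes, each step an elementary expansion or an elementary filling. -/
def MorseSeq (L K : Cplx) (k : ℕ) (W : ℕ → Cplx) : Prop :=
  W 0 = L ∧ W k = K ∧ (∀ i ≤ k, IsSimpComplex (W i)) ∧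
  ∀ i < k, ElemExpansion (W (i+1)) (W i) ∨ ElemFilling (W (i+1)) (W i)

/-- F is a stack on S: monotone with respect to inclusion. -/
def IsStackOn (S : Cplx) (F : Simplex → ℤ) : Prop :=
  ∀ σ ∈ S, ∀ τ ∈ S, σ ⊆ τ → F σ ≤ F τ

/-- (σ, τ) is a regular pair of the Morse sequence W (of length k). -/
def RegularPair (k : ℕ) (W : ℕ → Cplx) (σ τ : Simplex) : Prop :=
  ∃ i < k, σ ∉ W i ∧ τ ∉ W i ∧ W (i+1) = W i ∪ {σ, τ} ∧ IsFreePair (W (i+1)) σ τ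

/-- An F-sequence: a Morse sequence whose regular pairs satisfy F σ = F τ. -/
def FSeq (F : Simplex → ℤ) (L K : Cplx) (k : ℕ) (W : ℕ → Cplx) : Prop :=
  MorseSeq L K k W ∧ ∀ σ τ : Simplex, RegularPair k W σ τ → F σ = F τ

/-- A flooding sequence: an F-sequence from ∅ to K such that F σ ≤ F τ whenever
σ ∈ K_i and τ ∈ K_j appears strictly later (τ ∉ K_i), with i < j. -/
def Flooding (F : Simplex → ℤ) (K : Cplx) (k : ℕ) (W : ℕ → Cplx) : Prop :=
  FSeq F ∅ K k W ∧
  ∀ i j : ℕ, i < j → j ≤ k → ∀ σ ∈ W i, ∀ τ ∈ W j, τ ∉ W i → F σ ≤ F τ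

/-- Coboundary δ(ν, S) of ν in S. -/
def cob (S : Cplx) (ν : Simplex) : Cplx :=
  S.filter fun μ => ν ⊆ μ ∧ μ.card = ν.card + 1

/-- Boundary ∂(ν, S) of ν in S. -/
def bdry (S : Cplx) (ν : Simplex) : Cplx :=
  S.filter fun η => η ⊆ ν ∧ η.card + 1 = ν.card

/-! Both conditions fail exactly when some `ν ∉ S` lies between two members `σ ⊆ ν ⊆ τ` of `S`:
such a `ν` is a face of `cl S \ S` whose nonempty face `σ` lies in `S`, and conversely every face of
`cl S \ S` lies below some `τ ∈ S`. -/

theorem mem_cl {S : Cplx} {ν : Simplex} : ν ∈ cl S ↔ ν.Nonempty ∧ ∃ τ ∈ S, ν ⊆ τ := by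
  simp only [cl, mem_biUnion, mem_filter, mem_powerset]
  exact ⟨fun ⟨τ, hτ, hντ, hν⟩ => ⟨hν, τ, hτ, hντ⟩, fun ⟨hν, τ, hτ, hντ⟩ => ⟨τ, hτ, hντ, hν⟩⟩

theorem IsCosimplicial.isSimpComplex_cl_sdiff {S : Cplx} (h : IsCosimplicial S) :
    IsSimpComplex (cl S \ S) := by
  refine ⟨fun ν hν => (mem_cl.1 (mem_sdiff.1 hν).1).1, fun ν hν σ hσν hσ => ?_⟩
  obtain ⟨hνcl, hνS⟩ := mem_sdiff.1 hν
  obtain ⟨-, τ, hτ, hντ⟩ := mem_cl.1 hνcl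
  exact mem_sdiff.2 ⟨mem_cl.2 ⟨hσ, τ, hτ, hσν.trans hντ⟩,
    fun hσS => hνS (h σ hσS τ hτ ν hσν hντ)⟩

theorem isCosimplicial_of_isSimpComplex_cl_sdiff {S : Cplx} (hS : ∀ ν ∈ S, ν.Nonempty)
    (h : IsSimpComplex (cl S \ S)) : IsCosimplicial S := by
  intro σ hσ τ hτ ν hσν hντ
  by_contra hνS
  have hν : ν ∈ cl S \ S := mem_sdiff.2 ⟨mem_cl.2 ⟨(hS σ hσ).mono hσν, τ, hτ, hντ⟩, hνS⟩
  exact (mem_sdiff.1 (h.2 ν hν σ hσν (hS σ hσ))).2 hσ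

theorem cosimplicial_iff_closure_diff_simplicial (S : Cplx) (hS : ∀ ν ∈ S, ν.Nonempty) :
    IsCosimplicial S ↔ IsSimpComplex (cl S \ S) :=
  ⟨IsCosimplicial.isSimpComplex_cl_sdiff, isCosimplicial_of_isSimpComplex_cl_sdiff hS⟩
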